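/- Let Y be a real random variable with all moments finite, (Y_j)_{j≥1} mutually independent copies of Y, S_0 = 0, S_k = Y_1 + ⋯ + Y_k. For all integers n, r ≥ 0 and every real x with |x| < 1, the series Σ_{k=0}^{∞} C(k+r,k) x^k E[(S_k)_{n,λ}] converges and (1/(1−x))^{r+1} · F^{(r+1,Y)}_{n,λ}(x/(1−x)) = Σ_{k=0}^{∞} C(k+r,k) x^k E[(S_k)_{n,λ}]. -/

import Mathlib

open MeasureTheory ProbabilityTheory Finset
open scoped ENNReal NNReal

/-- The degenerate falling factorial `(x)_{n,lam} = prod_{j=0}^{n-1} (x - j*lam)`. -/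
noncomputable def degFallingFactorial (lam : ℝ) (n : ℕ) (x : ℝ) : ℝ :=
  ∏ j ∈ Finset.range n, (x - j * lam)

-- auxiliary lemmas
lemma degFF_zero (lam x : ℝ) : degFallingFactorial lam 0 x = 1 := by
  simp [degFallingFactorial]

lemma degFF_succ (lam : ℝ) (n : ℕ) (x : ℝ) :
    degFallingFactorial lam (n + 1) x = degFallingFactorial lam n x * (x - n * lam) := by
  simp [degFallingFactorial, Finset.prod_range_succ]

lemma degFF_add (lam x y : ℝ) (n : ℕ) :
    degFallingFactorial lam n (x + y) =
      ∑ m ∈ Finset.range (n + 1), (n.choose m : ℝ) * (degFallingFactorial lam m x *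
        degFallingFactorial lam (n - m) y) := by
  induction n with
  | zero => simp [degFallingFactorial]
  | succ n ih =>
    rw [degFF_succ, ih, Finset.sum_mul]
    have key : ∀ m ∈ Finset.range (n + 1),
        (n.choose m : ℝ) * (degFallingFactorial lam m x * degFallingFactorial lam (n - m) y) *
            (x + y - n * lam)
          = (n.choose m : ℝ) * (degFallingFactorial lam (m + 1) x *
              degFallingFactorial lam (n - m) y)
            + (n.choose m : ℝ) * (degFallingFactorial lam m x *
              degFallingFactorial lam (n + 1 - m) y) := by
      intro m hm
      rw [Finset.mem_range] at hm
      have hm' : m ≤ n := by omega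
      have h2 : n + 1 - m = (n - m) + 1 := by omega
      rw [h2, degFF_succ, degFF_succ]
      push_cast [Nat.cast_sub hm']
      ring
    rw [Finset.sum_congr rfl key, Finset.sum_add_distrib]
    -- target: ∑ m ∈ range (n+2), C(n+1,m) * (x_m * y_{n+1-m}) = S1 + S2
    rw [Finset.sum_range_succ' (fun m => ((n+1).choose m : ℝ) *
      (degFallingFactorial lam m x * degFallingFactorial lam (n + 1 - m) y)) (n+1)]
    have e1 : ∀ m ∈ Finset.range (n + 1),
        (((n+1).choose (m+1) : ℝ)) *
          (degFallingFactorial lam (m+1) x * degFallingFactorial lam (n + 1 - (m+1)) y)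
        = (n.choose m : ℝ) * (degFallingFactorial lam (m+1) x *
            degFallingFactorial lam (n - m) y)
          + (n.choose (m+1) : ℝ) * (degFallingFactorial lam (m+1) x *
            degFallingFactorial lam (n - m) y) := by
      intro m hm
      have h3 : n + 1 - (m + 1) = n - m := by omega
      rw [h3, Nat.choose_succ_succ]
      push_cast
      ring
    rw [Finset.sum_congr rfl e1, Finset.sum_add_distrib]
    have e2 : ∑ m ∈ Finset.range (n + 1), (n.choose (m+1) : ℝ) *
        (degFallingFactorial lam (m+1) x * degFallingFactorial lam (n - m) y)
        + ((n+1).choose 0 : ℝ) *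
          (degFallingFactorial lam 0 x * degFallingFactorial lam (n + 1 - 0) y)
        = ∑ m ∈ Finset.range (n + 1), (n.choose m : ℝ) *
            (degFallingFactorial lam m x * degFallingFactorial lam (n + 1 - m) y) := by
      have := Finset.sum_range_succ' (fun m => (n.choose m : ℝ) *
        (degFallingFactorial lam m x * degFallingFactorial lam (n + 1 - m) y)) n
      rw [this, Finset.sum_range_succ
        (fun m => (n.choose (m+1) : ℝ) *
          (degFallingFactorial lam (m+1) x * degFallingFactorial lam (n - m) y)) n]
      simp only [Nat.choose_succ_self, Nat.cast_zero, zero_mul, add_zero]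
      congr 1
      · apply Finset.sum_congr rfl
        intro m hm
        have : n + 1 - (m + 1) = n - m := by omega
        rw [this]
      · simp
    rw [add_assoc, e2]

lemma degFF_measurable (lam : ℝ) (n : ℕ) : Measurable (degFallingFactorial lam n) := by
  unfold degFallingFactorial
  exact Finset.measurable_prod _ fun j _ => measurable_id.sub measurable_const

lemma degFF_eq_eval (lam : ℝ) (n : ℕ) (x : ℝ) :
    degFallingFactorial lam n x =
      Polynomial.eval x (∏ j ∈ Finset.range n, (Polynomial.X - Polynomial.C ((j : ℝ) * lam))) := by
  rw [Polynomial.eval_prod]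
  simp [degFallingFactorial]

lemma memLp_nat_iff {Ω : Type*} [MeasurableSpace Ω] {μ : Measure Ω} {f : Ω → ℝ}
    (hf : AEStronglyMeasurable f μ) {m : ℕ} (hm : m ≠ 0) :
    MemLp f (m : ℝ≥0∞) μ ↔ Integrable (fun ω => |f ω| ^ m) μ := by
  have hm' : (m : ℝ≥0∞) ≠ 0 := by exact_mod_cast hm
  have htop : (m : ℝ≥0∞) ≠ ∞ := ENNReal.natCast_ne_top m
  have heq : (fun ω => ‖f ω‖ ^ ((m : ℝ≥0∞)).toReal) = fun ω => |f ω| ^ m := by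
    funext ω
    simp [Real.rpow_natCast]
  have h := memLp_norm_rpow_iff (q := (m : ℝ≥0∞)) (p := (m : ℝ≥0∞)) hf hm' htop
  rw [ENNReal.div_self hm' htop] at h
  rw [← h, heq, memLp_one_iff_integrable]

lemma integrable_pow_of_memLp {Ω : Type*} [MeasurableSpace Ω] {μ : Measure Ω} [IsFiniteMeasure μ]
    {f : Ω → ℝ} (hfm : Measurable f) (hf : ∀ m : ℕ, MemLp f (m : ℝ≥0∞) μ) (i : ℕ) :
    Integrable (fun ω => f ω ^ i) μ := by
  rcases Nat.eq_zero_or_pos i with h | h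
  · subst h; simpa using integrable_const (μ := μ) (1 : ℝ)
  · have habs := (memLp_nat_iff hfm.aestronglyMeasurable (by omega)).mp (hf i)
    refine habs.mono' (hfm.pow_const i).aestronglyMeasurable ?_
    filter_upwards with ω
    rw [Real.norm_eq_abs, abs_pow]

lemma integrable_poly_comp {Ω : Type*} [MeasurableSpace Ω] {μ : Measure Ω} [IsFiniteMeasure μ]
    {f : Ω → ℝ} (hf : Measurable f) (hLp : ∀ m : ℕ, MemLp f (m : ℝ≥0∞) μ) (p : Polynomial ℝ) :
    Integrable (fun ω => Polynomial.eval (f ω) p) μ := by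
  have heq : (fun ω => Polynomial.eval (f ω) p)
      = fun ω => ∑ i ∈ Finset.range (p.natDegree + 1), p.coeff i * f ω ^ i := by
    funext ω; rw [Polynomial.eval_eq_sum_range]
  rw [heq]
  apply integrable_finset_sum
  intro i _
  exact (integrable_pow_of_memLp hf hLp i).const_mul _

lemma integrable_degFF_comp {Ω : Type*} [MeasurableSpace Ω] {μ : Measure Ω} [IsFiniteMeasure μ]
    {f : Ω → ℝ} (hf : Measurable f) (hLp : ∀ m : ℕ, MemLp f (m : ℝ≥0∞) μ) (lam : ℝ) (n : ℕ) :
    Integrable (fun ω => degFallingFactorial lam n (f ω)) μ := by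
  have := integrable_poly_comp hf hLp (∏ j ∈ Finset.range n, (Polynomial.X - Polynomial.C ((j : ℝ) * lam)))
  simpa only [← degFF_eq_eval] using this

/-- The partial sums `S_k = Y_0 + ⋯ + Y_{k-1}` (so `S_0 = 0`). -/
noncomputable def partialSum {Ω : Type*} (Y : ℕ → Ω → ℝ) (k : ℕ) (ω : Ω) : ℝ :=
  ∑ j ∈ Finset.range k, Y j ω

/-- The probabilistic degenerate Stirling numbers of the second kind associated with `Y`. -/
noncomputable def probDegStirling2 {Ω : Type*} [MeasurableSpace Ω] (μ : Measure Ω)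
    (Y : ℕ → Ω → ℝ) (lam : ℝ) (n k : ℕ) : ℝ :=
  (1 / k.factorial : ℝ) *
    ∑ j ∈ Finset.range (k + 1),
      (-1 : ℝ) ^ (k - j) * k.choose j * ∫ ω, degFallingFactorial lam n (partialSum Y j ω) ∂μ

/-- The probabilistic degenerate Fubini polynomials of order `r` associated with `Y`. -/
noncomputable def probDegFubiniOrder {Ω : Type*} [MeasurableSpace Ω] (μ : Measure Ω)
    (Y : ℕ → Ω → ℝ) (lam : ℝ) (r n : ℕ) (x : ℝ) : ℝ :=
  ∑ i ∈ Finset.range (n + 1),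
    ((r + i - 1).choose i : ℝ) * i.factorial * probDegStirling2 μ Y lam n i * x ^ i

theorem probDegFubiniOrder_geometric_transform
    {Ω : Type*} [MeasurableSpace Ω] (μ : Measure Ω) [IsProbabilityMeasure μ]
    (Y : ℕ → Ω → ℝ) (lam : ℝ)
    (hmeas : ∀ j, Measurable (Y j))
    (hindep : iIndepFun Y μ)
    (hident : ∀ j, IdentDistrib (Y j) (Y 0) μ μ)
    (hmom : ∀ m : ℕ, Integrable (fun ω => |Y 0 ω| ^ m) μ)
    (n r : ℕ) (x : ℝ) (hx : |x| < 1) :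
    HasSum
      (fun k : ℕ =>
        ((k + r).choose k : ℝ) * x ^ k *
          ∫ ω, degFallingFactorial lam n (partialSum Y k ω) ∂μ)
      ((1 / (1 - x)) ^ (r + 1) * probDegFubiniOrder μ Y lam (r + 1) n (x / (1 - x))) := by
  classical
  have hmeasS : ∀ k, Measurable (partialSum Y k) := by
    intro k
    unfold partialSum
    exact Finset.measurable_sum _ fun j _ => hmeas j
  have hYLp : ∀ j (m : ℕ), MemLp (Y j) (m : ℝ≥0∞) μ := by
    intro j m
    have h0 : MemLp (Y 0) (m : ℝ≥0∞) μ := by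
      rcases Nat.eq_zero_or_pos m with hm | hm
      · subst hm
        simpa using memLp_zero_iff_aestronglyMeasurable.mpr (hmeas 0).aestronglyMeasurable
      · exact (memLp_nat_iff (hmeas 0).aestronglyMeasurable (by omega)).mpr (hmom m)
    exact (hident j).symm.memLp_snd h0
  have hSLp : ∀ k (m : ℕ), MemLp (partialSum Y k) (m : ℝ≥0∞) μ := by
    intro k m
    induction k with
    | zero =>
      have h0 : partialSum Y 0 = fun _ => (0 : ℝ) := by funext ω; simp [partialSum]
      rw [h0]
      exact memLp_const 0
    | succ k ih =>
      have h1 : partialSum Y (k + 1) = partialSum Y k + Y k := by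
        funext ω; simp [partialSum, Finset.sum_range_succ]
      rw [h1]
      exact ih.add (hYLp k m)
  have hIntS : ∀ (j k : ℕ), Integrable (fun ω => degFallingFactorial lam j (partialSum Y k ω)) μ :=
    fun j k => integrable_degFF_comp (hmeasS k) (hSLp k) lam j
  have hIntY : ∀ (j k : ℕ), Integrable (fun ω => degFallingFactorial lam j (Y k ω)) μ :=
    fun j k => integrable_degFF_comp (hmeas k) (hYLp k) lam j
  set A : ℕ → ℕ → ℝ := fun j k => ∫ ω, degFallingFactorial lam j (partialSum Y k ω) ∂μ with hA
  set c : ℕ → ℝ := fun j => ∫ ω, degFallingFactorial lam j (Y 0 ω) ∂μ with hc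
  have hc0 : c 0 = 1 := by simp [hc, degFF_zero]
  have hA0 : ∀ k, A 0 k = 1 := by intro k; simp [hA, degFF_zero]
  have hrec : ∀ (j k : ℕ),
      A j (k + 1) = ∑ m ∈ Finset.range (j + 1), (j.choose m : ℝ) * (A m k * c (j - m)) := by
    intro j k
    have hps : partialSum Y (k + 1) = fun ω => partialSum Y k ω + Y k ω := by
      funext ω; simp [partialSum, Finset.sum_range_succ]
    have hind : IndepFun (partialSum Y k) (Y k) μ := by
      have hps' : partialSum Y k = ∑ i ∈ Finset.range k, Y i := by
        funext ω; simp [partialSum]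
      rw [hps']
      exact hindep.indepFun_finsetSum_of_notMem hmeas (by simp)
    have hcomp : ∀ m, IndepFun (fun ω => degFallingFactorial lam m (partialSum Y k ω))
        (fun ω => degFallingFactorial lam (j - m) (Y k ω)) μ := fun m =>
      hind.comp (degFF_measurable lam m) (degFF_measurable lam (j - m))
    have hintmul : ∀ m, Integrable (fun ω => degFallingFactorial lam m (partialSum Y k ω) *
        degFallingFactorial lam (j - m) (Y k ω)) μ := fun m =>
      (hcomp m).integrable_mul (hIntS m k) (hIntY (j - m) k)
    calc A j (k + 1)
        = ∫ ω, ∑ m ∈ Finset.range (j + 1), (j.choose m : ℝ) *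
            (degFallingFactorial lam m (partialSum Y k ω) *
             degFallingFactorial lam (j - m) (Y k ω)) ∂μ := by
          simp only [hA, hps]
          congr 1
          funext ω
          exact degFF_add lam _ _ j
      _ = ∑ m ∈ Finset.range (j + 1), ∫ ω, (j.choose m : ℝ) *
            (degFallingFactorial lam m (partialSum Y k ω) *
             degFallingFactorial lam (j - m) (Y k ω)) ∂μ :=
          integral_finset_sum _ fun m _ => (hintmul m).const_mul _
      _ = ∑ m ∈ Finset.range (j + 1), (j.choose m : ℝ) * (A m k * c (j - m)) := by
          apply Finset.sum_congr rfl
          intro m _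
          rw [integral_const_mul]
          congr 1
          have hmul := (hcomp m).integral_fun_mul_eq_mul_integral (hIntS m k).aestronglyMeasurable (hIntY (j - m) k).aestronglyMeasurable
          have hid : ∫ ω, degFallingFactorial lam (j - m) (Y k ω) ∂μ = c (j - m) :=
            ((hident k).comp (degFF_measurable lam (j - m))).integral_eq
          rw [← hid, hmul]
  have hdiff : ∀ j : ℕ, fwdDiff 1 (A j) =
      ∑ m ∈ Finset.range j, ((j.choose m : ℝ) * c (j - m)) • A m := by
    intro j
    funext k
    have h1 : fwdDiff 1 (A j) k = A j (k + 1) - A j k := rfl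
    rw [h1, hrec j k, Finset.sum_range_succ]
    simp only [Nat.choose_self, Nat.cast_one, one_mul, Nat.sub_self, hc0, mul_one]
    rw [add_sub_cancel_right, Finset.sum_apply]
    apply Finset.sum_congr rfl
    intro m _
    simp only [Pi.smul_apply, smul_eq_mul]
    ring
  have hvanish : ∀ j, ∀ i, j < i → (fwdDiff 1)^[i] (A j) = 0 := by
    intro j
    induction j using Nat.strong_induction_on with
    | _ j IH =>
      intro i hi
      obtain ⟨i, rfl⟩ : ∃ i', i = i' + 1 := ⟨i - 1, by omega⟩
      rw [Function.iterate_succ_apply, hdiff j, fwdDiff_iter_finsetSum]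
      funext k
      rw [Finset.sum_apply]
      apply Finset.sum_eq_zero
      intro m hm
      have hm' := Finset.mem_range.mp hm
      rw [fwdDiff_iter_const_smul, IH m hm' i (by omega)]
      simp
  set T : ℕ → ℝ := fun i => (fwdDiff 1)^[i] (A n) 0 with hT
  have hNewton : ∀ k, A n k = ∑ i ∈ Finset.range (k + 1), (k.choose i : ℝ) * T i := by
    intro k
    have h := shift_eq_sum_fwdDiff_iter (h := 1) (A n) k 0
    simp only [smul_eq_mul, mul_one, zero_add] at h
    rw [h]
    apply Finset.sum_congr rfl
    intro i _
    rw [hT, nsmul_eq_mul]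
  have hNewton' : ∀ k, A n k = ∑ i ∈ Finset.range (n + 1), (k.choose i : ℝ) * T i := by
    intro k
    rw [hNewton k]
    rcases le_total k n with h | h
    · apply Finset.sum_subset
      · intro i hi; simp only [Finset.mem_range] at hi ⊢; omega
      · intro i _ hi
        simp only [Finset.mem_range, not_lt] at hi
        rw [Nat.choose_eq_zero_of_lt (by omega)]
        simp
    · symm
      apply Finset.sum_subset
      · intro i hi; simp only [Finset.mem_range] at hi ⊢; omega
      · intro i _ hi
        simp only [Finset.mem_range, not_lt] at hi
        have hz : T i = 0 := by
          show (fwdDiff 1)^[i] (A n) 0 = 0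
          rw [hvanish n i (by omega)]
          rfl
        rw [hz, mul_zero]
  have hTval : ∀ i, T i = ∑ jj ∈ Finset.range (i + 1),
      (-1 : ℝ) ^ (i - jj) * (i.choose jj : ℝ) * A n jj := by
    intro i
    have h2 := fwdDiff_iter_eq_sum_shift (h := 1) (A n) i 0
    simp only [smul_eq_mul, mul_one, zero_add] at h2
    show (fwdDiff 1)^[i] (A n) 0 = _
    rw [h2]
    apply Finset.sum_congr rfl
    intro jj _
    rw [zsmul_eq_mul]
    push_cast
    ring
  have hTS : ∀ i, T i = (Nat.factorial i : ℝ) * probDegStirling2 μ Y lam n i := by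
    intro i
    rw [probDegStirling2, ← mul_assoc, mul_one_div,
      div_self (Nat.cast_ne_zero.mpr (Nat.factorial_ne_zero i)), one_mul, hTval i]
  have hchoose : ∀ i k : ℕ, (k + r).choose k * k.choose i
      = (r + i).choose i * (k + r).choose (r + i) := by
    intro i k
    rcases le_or_gt i k with h | h
    · have h1 := Nat.choose_mul (n := k + r) h
      have h2 := Nat.choose_mul (n := k + r) (k := r + i) (show i ≤ r + i by omega)
      rw [show r + i - i = r from by omega] at h2
      have h4 : (k + r - i).choose (k - i) = (k + r - i).choose r := by
        rw [show k - i = k + r - i - r from by omega]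
        exact Nat.choose_symm (by omega)
      rw [h1, h4, ← h2, mul_comm]
    · rw [Nat.choose_eq_zero_of_lt h, mul_zero,
        Nat.choose_eq_zero_of_lt (show k + r < r + i by omega), mul_zero]
  have hxnorm : ‖x‖ < 1 := by rwa [Real.norm_eq_abs]
  have hgeom : ∀ i : ℕ, HasSum (fun k : ℕ => ((k + r).choose k : ℝ) * (k.choose i : ℝ) * x ^ k)
      (((r + i).choose i : ℝ) * (x ^ i * (1 / (1 - x) ^ (r + i + 1)))) := by
    intro i
    have base := hasSum_choose_mul_geometric_of_norm_lt_one (𝕜 := ℝ) (r + i) hxnorm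
    have base2 := base.mul_left (x ^ i)
    have hshift : (fun m : ℕ => x ^ i * (((m + (r + i)).choose (r + i) : ℝ) * x ^ m))
        = fun m : ℕ => ((m + i + r).choose (r + i) : ℝ) * x ^ (m + i) := by
      funext m
      rw [show m + i + r = m + (r + i) from by omega, pow_add]
      ring
    rw [hshift] at base2
    replace base2 := (hasSum_nat_add_iff
      (f := fun k : ℕ => ((k + r).choose (r + i) : ℝ) * x ^ k) i).mp base2
    have hz : (∑ j ∈ Finset.range i, (((j + r).choose (r + i) : ℝ) * x ^ j)) = 0 := by
      apply Finset.sum_eq_zero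
      intro j hj
      simp only [Finset.mem_range] at hj
      rw [Nat.choose_eq_zero_of_lt (by omega)]
      simp
    rw [hz, add_zero] at base2
    have final := base2.mul_left ((r + i).choose i : ℝ)
    have hfeq : (fun k : ℕ => ((r + i).choose i : ℝ) * (((k + r).choose (r + i) : ℝ) * x ^ k))
        = fun k : ℕ => ((k + r).choose k : ℝ) * (k.choose i : ℝ) * x ^ k := by
      funext k
      have := hchoose i k
      have hcast : ((k + r).choose k : ℝ) * (k.choose i : ℝ)
          = ((r + i).choose i : ℝ) * ((k + r).choose (r + i) : ℝ) := by
        exact_mod_cast congrArg (Nat.cast : ℕ → ℝ) this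
      rw [← mul_assoc, ← hcast]
    rw [hfeq] at final
    exact final
  have hsum : HasSum (fun k : ℕ => ∑ i ∈ Finset.range (n + 1),
      T i * (((k + r).choose k : ℝ) * (k.choose i : ℝ) * x ^ k))
      (∑ i ∈ Finset.range (n + 1),
        T i * (((r + i).choose i : ℝ) * (x ^ i * (1 / (1 - x) ^ (r + i + 1))))) :=
    hasSum_sum fun i _ => (hgeom i).mul_left (T i)
  have hfun : (fun k : ℕ => ∑ i ∈ Finset.range (n + 1),
      T i * (((k + r).choose k : ℝ) * (k.choose i : ℝ) * x ^ k))
      = fun k : ℕ => ((k + r).choose k : ℝ) * x ^ k * A n k := by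
    funext k
    rw [hNewton' k, Finset.mul_sum]
    apply Finset.sum_congr rfl
    intro i _
    ring
  have hne : (1 : ℝ) - x ≠ 0 := by
    have : x < 1 := (abs_lt.mp hx).2
    intro hcon
    nlinarith
  have hval : (∑ i ∈ Finset.range (n + 1),
      T i * (((r + i).choose i : ℝ) * (x ^ i * (1 / (1 - x) ^ (r + i + 1)))))
      = (1 / (1 - x)) ^ (r + 1) * probDegFubiniOrder μ Y lam (r + 1) n (x / (1 - x)) := by
    rw [probDegFubiniOrder, Finset.mul_sum]
    apply Finset.sum_congr rfl
    intro i _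
    rw [show r + 1 + i - 1 = r + i from by omega, hTS i, div_pow]
    field_simp
    have hpow : ((1 - x)⁻¹) ^ i * (1 - x) ^ i = 1 := by rw [← mul_pow, inv_mul_cancel₀ hne, one_pow]
    linear_combination (probDegStirling2 μ Y lam n i * ((r + i).choose i : ℝ) * x * x ^ i * (1 - x) ^ r - probDegStirling2 μ Y lam n i * ((r + i).choose i : ℝ) * x ^ i * (1 - x) ^ r) * hpow
  rw [hfun, hval] at hsum
  simpa only [hA] using hsum
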